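/- Let X be a finite set of observations with |X| ≥ 3 and let x, y, z ∈ X. Let B_{xyz} = B_{xy} ∪ B_{yz} ∪ B_{xz} be the set of bands containing x, y, or z at some time. Then |B_{xyz}| · Σ_{b ∈ B_{xyz}} d^b_{xz} ≤ |B_{xz}| · ( Σ_{b ∈ B_{xyz}} d^b_{xy} + Σ_{b ∈ B_{xyz}} d^b_{yz} ). -/
import Mathlib


open Finset
open scoped Classical

/-- The set of times at which observation `x` lies within the band determined by the
unordered pair `s` of observations: times `t` with `b_ℓ(t) ≤ x t ≤ b_u(t)`. -/
noncomputable def timesInS {T : Type*} [Fintype T] (s : Sym2 (T → ℝ)) (x : T → ℝ) : Finset T :=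
  Finset.univ.filter (fun t =>
    Sym2.lift ⟨fun v w => min (v t) (w t), fun v w => min_comm (v t) (w t)⟩ s ≤ x t ∧
    x t ≤ Sym2.lift ⟨fun v w => max (v t) (w t), fun v w => max_comm (v t) (w t)⟩ s)

/-- The set of bands of a dataset `X`: one band for each unordered pair of distinct
observations in `X`. -/
noncomputable def bands {T : Type*} [Fintype T] (X : Finset (T → ℝ)) : Finset (Sym2 (T → ℝ)) :=
  X.sym2.filter (fun s => ¬ s.IsDiag)

/-- Bandwise (Jaccard) similarity of `x` and `y` with respect to the band `s`. -/
noncomputable def bandSimS {T : Type*} [Fintype T] (s : Sym2 (T → ℝ)) (x y : T → ℝ) : ℝ :=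
  if timesInS s x ∪ timesInS s y = ∅ then 1
  else ((timesInS s x ∩ timesInS s y).card : ℝ) / ((timesInS s x ∪ timesInS s y).card : ℝ)

/-- Bandwise (Jaccard) distance of `x` and `y` with respect to the band `s`. -/
noncomputable def bandDistS {T : Type*} [Fintype T] (s : Sym2 (T → ℝ)) (x y : T → ℝ) : ℝ :=
  1 - bandSimS s x y

/-- `B_{xy}`: the set of bands of `X` containing `x` or `y` at some time. -/
noncomputable def Bxy {T : Type*} [Fintype T] (X : Finset (T → ℝ)) (x y : T → ℝ) :
    Finset (Sym2 (T → ℝ)) :=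
  (bands X).filter (fun s => timesInS s x ∪ timesInS s y ≠ ∅)

/-- The band distance `D_{xy}`: the average bandwise distance over all bands in `B_{xy}`. -/
noncomputable def bandD {T : Type*} [Fintype T] (X : Finset (T → ℝ)) (x y : T → ℝ) : ℝ :=
  (1 / ((Bxy X x y).card : ℝ)) * ∑ s ∈ Bxy X x y, bandDistS s x y


open scoped symmDiff


noncomputable def jd {τ : Type*} (A B : Finset τ) : ℝ :=
  if A ∪ B = ∅ then 0 else 1 - ((A ∩ B).card : ℝ) / ((A ∪ B).card : ℝ)

lemma jd_nonneg {τ : Type*} (A B : Finset τ) : 0 ≤ jd A B := by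
  unfold jd
  split
  · norm_num
  · have h : ((A ∩ B).card : ℝ) / ((A ∪ B).card : ℝ) ≤ 1 := by
      apply div_le_one_of_le₀
      · exact_mod_cast Finset.card_le_card (Finset.inter_subset_union)
      · positivity
    linarith

lemma jd_le_one {τ : Type*} (A B : Finset τ) : jd A B ≤ 1 := by
  unfold jd
  split
  · norm_num
  · have h : 0 ≤ ((A ∩ B).card : ℝ) / ((A ∪ B).card : ℝ) := by positivity
    linarith

lemma card_symmDiff_add {τ : Type*} (A B : Finset τ) :
    (A ∆ B).card + (A ∩ B).card = (A ∪ B).card := by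
  rw [symmDiff_eq_sup_sdiff_inf, sup_eq_union, inf_eq_inter]
  exact Finset.card_sdiff_add_card_eq_card (Finset.inter_subset_union)

lemma card_symmDiff_tri {τ : Type*} (A B C : Finset τ) :
    (A ∆ C).card ≤ (A ∆ B).card + (B ∆ C).card := by
  calc (A ∆ C).card ≤ ((A ∆ B) ∪ (B ∆ C)).card :=
        Finset.card_le_card (by simpa using symmDiff_triangle A B C)
    _ ≤ (A ∆ B).card + (B ∆ C).card := Finset.card_union_le _ _

lemma card_le_symmDiff {τ : Type*} (A B : Finset τ) :
    B.card ≤ A.card + (A ∆ B).card := by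
  calc B.card ≤ (A ∪ (A ∆ B)).card := by
        apply Finset.card_le_card
        intro t ht
        by_cases h : t ∈ A
        · exact Finset.mem_union_left _ h
        · exact Finset.mem_union_right _ (by rw [Finset.mem_symmDiff]; tauto)
    _ ≤ A.card + (A ∆ B).card := Finset.card_union_le _ _

lemma real_aux (a b c al be ga : ℝ) (ha : 0 ≤ a) (hb : 0 ≤ b)
    (hal : 0 ≤ al) (hga : 0 ≤ ga)
    (htri : c ≤ a + b) (h1 : be ≤ ga + b) (h2 : be ≤ al + a)
    (dAC : 0 < al + ga + c) (dAB : 0 < al + be + a) (dBC : 0 < be + ga + b) :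
    2*c/(al+ga+c) ≤ 2*a/(al+be+a) + 2*b/(be+ga+b) := by
  have h4 : 0 < al + ga + (a + b) := by linarith
  have s1 : 2*c/(al+ga+c) ≤ 2*(a+b)/(al+ga+(a+b)) := by
    rw [div_le_div_iff₀ dAC h4]
    nlinarith [mul_nonneg (by linarith : (0:ℝ) ≤ a + b - c) (by linarith : (0:ℝ) ≤ al + ga)]
  have s2 : 2*a/(al+ga+(a+b)) ≤ 2*a/(al+be+a) := by
    apply div_le_div_of_nonneg_left (by linarith) dAB (by linarith)
  have s3 : 2*b/(al+ga+(a+b)) ≤ 2*b/(be+ga+b) := by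
    apply div_le_div_of_nonneg_left (by linarith) dBC (by linarith)
  have split : 2*(a+b)/(al+ga+(a+b)) = 2*a/(al+ga+(a+b)) + 2*b/(al+ga+(a+b)) := by
    ring
  linarith

lemma jd_eq_symmDiff {τ : Type*} (A B : Finset τ) (h : A ∪ B ≠ ∅) :
    jd A B = 2 * ((A ∆ B).card : ℝ) / ((A.card : ℝ) + B.card + (A ∆ B).card) := by
  have hu : 0 < (A ∪ B).card := Finset.card_pos.2 (Finset.nonempty_iff_ne_empty.2 h)
  have h1 := card_symmDiff_add A B
  have h2 := Finset.card_union_add_card_inter A B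
  have e1 : (A.card : ℝ) + B.card + (A ∆ B).card = 2 * ((A ∪ B).card : ℝ) := by
    have : A.card + B.card + (A ∆ B).card = 2 * (A ∪ B).card := by omega
    exact_mod_cast this
  have e2 : ((A ∩ B).card : ℝ) = ((A ∪ B).card : ℝ) - ((A ∆ B).card : ℝ) := by
    have : ((A ∆ B).card : ℝ) + (A ∩ B).card = (A ∪ B).card := by exact_mod_cast h1
    linarith
  rw [jd, if_neg h, e1, e2]
  have hu' : ((A ∪ B).card : ℝ) ≠ 0 := by positivity
  field_simp
  ring

lemma jd_tri {τ : Type*} (A B C : Finset τ) : jd A C ≤ jd A B + jd B C := by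
  by_cases hAB : A ∪ B = ∅
  · obtain ⟨hA, hB⟩ := Finset.union_eq_empty.1 hAB
    subst hA; subst hB
    have : jd (∅ : Finset τ) ∅ = 0 := by simp [jd]
    rw [this]
    simp
  by_cases hBC : B ∪ C = ∅
  · obtain ⟨hB, hC⟩ := Finset.union_eq_empty.1 hBC
    subst hB; subst hC
    have : jd (∅ : Finset τ) (∅ : Finset τ) = 0 := by simp [jd]
    rw [this]
    simp
  by_cases hAC : A ∪ C = ∅
  · have h0 : jd A C = 0 := by rw [jd, if_pos hAC]
    rw [h0]
    have := jd_nonneg A B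
    have := jd_nonneg B C
    linarith
  · rw [jd_eq_symmDiff A C hAC, jd_eq_symmDiff A B hAB, jd_eq_symmDiff B C hBC]
    have dAC : (0:ℝ) < A.card + C.card + (A ∆ C).card := by
      have : 0 < (A ∪ C).card := Finset.card_pos.2 (Finset.nonempty_iff_ne_empty.2 hAC)
      have e1 := card_symmDiff_add A C
      have e2 := Finset.card_union_add_card_inter A C
      have : 0 < A.card + C.card + (A ∆ C).card := by omega
      exact_mod_cast this
    have dAB : (0:ℝ) < A.card + B.card + (A ∆ B).card := by
      have : 0 < (A ∪ B).card := Finset.card_pos.2 (Finset.nonempty_iff_ne_empty.2 hAB)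
      have e1 := card_symmDiff_add A B
      have e2 := Finset.card_union_add_card_inter A B
      have : 0 < A.card + B.card + (A ∆ B).card := by omega
      exact_mod_cast this
    have dBC : (0:ℝ) < B.card + C.card + (B ∆ C).card := by
      have : 0 < (B ∪ C).card := Finset.card_pos.2 (Finset.nonempty_iff_ne_empty.2 hBC)
      have e1 := card_symmDiff_add B C
      have e2 := Finset.card_union_add_card_inter B C
      have : 0 < B.card + C.card + (B ∆ C).card := by omega
      exact_mod_cast this
    have := real_aux ((A ∆ B).card) ((B ∆ C).card) ((A ∆ C).card) A.card B.card C.card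
      (by positivity) (by positivity) (by positivity) (by positivity)
      (by exact_mod_cast card_symmDiff_tri A B C)
      (by have := card_le_symmDiff C B; rw [symmDiff_comm] at this; exact_mod_cast this)
      (by exact_mod_cast card_le_symmDiff A B)
      dAC dAB dBC
    convert this using 2 <;> ring

lemma bandDistS_eq {T : Type*} [Fintype T] (s : Sym2 (T → ℝ)) (x y : T → ℝ) :
    bandDistS s x y = jd (timesInS s x) (timesInS s y) := by
  unfold bandDistS bandSimS jd
  split <;> ring

lemma bandDistS_tri {T : Type*} [Fintype T] (s : Sym2 (T → ℝ)) (x y z : T → ℝ) :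
    bandDistS s x z ≤ bandDistS s x y + bandDistS s y z := by
  rw [bandDistS_eq, bandDistS_eq, bandDistS_eq]
  exact jd_tri _ _ _

lemma bandDistS_nonneg {T : Type*} [Fintype T] (s : Sym2 (T → ℝ)) (x y : T → ℝ) :
    0 ≤ bandDistS s x y := by rw [bandDistS_eq]; exact jd_nonneg _ _

lemma bandDistS_le_one {T : Type*} [Fintype T] (s : Sym2 (T → ℝ)) (x y : T → ℝ) :
    bandDistS s x y ≤ 1 := by rw [bandDistS_eq]; exact jd_le_one _ _

/-- Key counting inequality for the triangle inequality: with
`B_{xyz} = B_{xy} ∪ B_{yz} ∪ B_{xz}`,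
`|B_{xyz}| · Σ_{b ∈ B_{xyz}} d^b_{xz} ≤ |B_{xz}| · (Σ_{b ∈ B_{xyz}} d^b_{xy} + Σ_{b ∈ B_{xyz}} d^b_{yz})`. -/
theorem band_sum_triangle_counting {T : Type*} [Fintype T] [Nonempty T]
    (X : Finset (T → ℝ)) (hX : 3 ≤ X.card)
    (x y z : T → ℝ) (hx : x ∈ X) (hy : y ∈ X) (hz : z ∈ X) :
    ((Bxy X x y ∪ Bxy X y z ∪ Bxy X x z).card : ℝ) *
        ∑ b ∈ Bxy X x y ∪ Bxy X y z ∪ Bxy X x z, bandDistS b x z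
      ≤ ((Bxy X x z).card : ℝ) *
        ((∑ b ∈ Bxy X x y ∪ Bxy X y z ∪ Bxy X x z, bandDistS b x y) +
          ∑ b ∈ Bxy X x y ∪ Bxy X y z ∪ Bxy X x z, bandDistS b y z) := by
  set U := Bxy X x y ∪ Bxy X y z ∪ Bxy X x z with hU
  set P := Bxy X x z with hP
  have hsub : P ⊆ U := Finset.subset_union_right
  have hzero : ∀ b ∈ U \ P,
      bandDistS b x z = 0 ∧ bandDistS b x y = 1 ∧ bandDistS b y z = 1 := by
    intro b hb
    rcases Finset.mem_sdiff.1 hb with ⟨hbU, hbn⟩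
    have hbB : b ∈ bands X := by
      rcases Finset.mem_union.1 hbU with h | h
      · rcases Finset.mem_union.1 h with h | h
        · exact (Finset.mem_filter.1 h).1
        · exact (Finset.mem_filter.1 h).1
      · exact (Finset.mem_filter.1 h).1
    have hxz : timesInS b x ∪ timesInS b z = ∅ := by
      by_contra h
      exact hbn (Finset.mem_filter.2 ⟨hbB, h⟩)
    obtain ⟨hTx, hTz⟩ := Finset.union_eq_empty.1 hxz
    have hTy : timesInS b y ≠ ∅ := by
      rcases Finset.mem_union.1 hbU with h | h
      · rcases Finset.mem_union.1 h with h | h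
        · have h2 := (Finset.mem_filter.1 h).2
          rw [hTx] at h2
          simpa using h2
        · have h2 := (Finset.mem_filter.1 h).2
          rw [hTz] at h2
          simpa using h2
      · exact absurd h hbn
    refine ⟨?_, ?_, ?_⟩
    · unfold bandDistS bandSimS
      rw [if_pos hxz]
      ring
    · simp [bandDistS, bandSimS, hTx, hTy]
    · simp [bandDistS, bandSimS, hTz, hTy]
  have e_xz : ∑ b ∈ U, bandDistS b x z = ∑ b ∈ P, bandDistS b x z :=
    (Finset.sum_subset hsub (fun b hb hbn =>
      (hzero b (Finset.mem_sdiff.2 ⟨hb, hbn⟩)).1)).symm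
  have e_one : ∀ (w v : T → ℝ), (∀ b ∈ U \ P, bandDistS b w v = 1) →
      ∑ b ∈ U, bandDistS b w v = (∑ b ∈ P, bandDistS b w v) + ((U \ P).card : ℝ) := by
    intro w v h1
    rw [← Finset.sum_sdiff hsub]
    rw [Finset.sum_congr rfl h1]
    simp [add_comm]
  have e_xy := e_one x y (fun b hb => (hzero b hb).2.1)
  have e_yz := e_one y z (fun b hb => (hzero b hb).2.2)
  have hcard : (U \ P).card + P.card = U.card := Finset.card_sdiff_add_card_eq_card hsub
  set S := ∑ b ∈ P, bandDistS b x z with hS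
  set A1 := ∑ b ∈ P, bandDistS b x y with hA1
  set A2 := ∑ b ∈ P, bandDistS b y z with hA2
  set m := ((U \ P).card : ℝ) with hm
  set n := ((P).card : ℝ) with hn
  have hNcast : (U.card : ℝ) = m + n := by
    rw [hm, hn]
    exact_mod_cast hcard.symm
  have hS_tri : S ≤ A1 + A2 := by
    rw [hS, hA1, hA2, ← Finset.sum_add_distrib]
    exact Finset.sum_le_sum (fun b _ => bandDistS_tri b x y z)
  have hS_n : S ≤ n := by
    rw [hS, hn]
    calc ∑ b ∈ P, bandDistS b x z ≤ ∑ _b ∈ P, (1:ℝ) :=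
          Finset.sum_le_sum (fun b _ => bandDistS_le_one b x z)
      _ = (P.card : ℝ) := by simp
  have hS_nonneg : 0 ≤ S := Finset.sum_nonneg (fun b _ => bandDistS_nonneg b x z)
  have hA1_nonneg : 0 ≤ A1 := Finset.sum_nonneg (fun b _ => bandDistS_nonneg b x y)
  have hA2_nonneg : 0 ≤ A2 := Finset.sum_nonneg (fun b _ => bandDistS_nonneg b y z)
  have hm_nonneg : 0 ≤ m := by positivity
  have hn_nonneg : 0 ≤ n := by positivity
  rw [e_xz, e_xy, e_yz, hNcast]
  nlinarith [mul_nonneg hn_nonneg (by linarith : 0 ≤ A1 + A2 - S),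
    mul_nonneg hm_nonneg (by linarith : 0 ≤ n - S),
    mul_nonneg hm_nonneg hn_nonneg]
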